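/- Let G be a finite p-group of nilpotency class 3 generated by x,y such that each of the maps x↦y,y↦x; x↦x⁻¹,y↦y; x↦xy,y↦y extends to an automorphism of G. Set z=[x,y], u=[z,x], v=[z,y]. If o(u)=o(v)=p^c and ⟨u⟩∩⟨v⟩=1 hold together with ⟨z⟩∩⟨u,v⟩ cyclic generated by some z^k with z^k=u^i v^j, then ⟨u⟩∩⟨v⟩=1 implies ⟨z⟩∩⟨u,v⟩=1. -/

import Mathlib

/-- The commutator `[a,b] = a⁻¹b⁻¹ab` used in the paper. -/
def pcomm {G : Type*} [Group G] (a b : G) : G := a⁻¹ * b⁻¹ * a * b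

/-!
As `G` has class at most 3, `u` and `v` are central, and commutator calculus modulo central
commutators computes the three automorphisms on `z, u, v`:
`τ : z ↦ z⁻¹, u ↦ v⁻¹, v ↦ u⁻¹`, `π : z ↦ z⁻¹u, u ↦ u, v ↦ v⁻¹` and `ζ : z ↦ zv, u ↦ vu, v ↦ v`.
Applying them to `z^k = u^i v^j` gives `u^(j-i) = v^(j-i)`, `u^k = u^(2i)` and `v^k = v^i`.
The first power is trivial because `⟨u⟩ ∩ ⟨v⟩ = 1`, and since `τ` exchanges `u` with `v⁻¹` the
exponents annihilating `u` and `v` coincide; together this forces `u^i = v^j = 1`.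
-/

open Subgroup
open scoped commutatorElement

section Commutator

variable {G : Type*} [Group G] {a b c : G}

theorem pcomm_inv (a b : G) : (pcomm a b)⁻¹ = pcomm b a := by
  simp only [pcomm]; group

theorem map_pcomm {H F : Type*} [Group H] [FunLike F G H] [MonoidHomClass F G H] (f : F)
    (a b : G) : f (pcomm a b) = pcomm (f a) (f b) := by
  simp only [pcomm, map_mul, map_inv]

theorem pcomm_inv_left (h : Commute a (pcomm a b)) : pcomm a⁻¹ b = (pcomm a b)⁻¹ := by
  rw [eq_comm, inv_eq_iff_mul_eq_one]
  calc pcomm a b * pcomm a⁻¹ b = pcomm a b * a * (b⁻¹ * a⁻¹ * b) := by simp only [pcomm]; group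
    _ = a * pcomm a b * (b⁻¹ * a⁻¹ * b) := by rw [h.eq]
    _ = 1 := by simp only [pcomm]; group

theorem pcomm_inv_right (h : Commute b (pcomm a b)) : pcomm a b⁻¹ = (pcomm a b)⁻¹ := by
  have h' : Commute b (pcomm b a) := by rw [← pcomm_inv]; exact h.inv_right
  rw [← pcomm_inv b⁻¹, pcomm_inv_left h', inv_inv, pcomm_inv]

theorem pcomm_inv_inv (ha : Commute a (pcomm a b)) (hb : Commute b (pcomm a b)) :
    pcomm a⁻¹ b⁻¹ = pcomm a b := by
  have ha' : Commute a (pcomm a b⁻¹) := by rw [pcomm_inv_right hb]; exact ha.inv_right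
  rw [pcomm_inv_left ha', pcomm_inv_right hb, inv_inv]

theorem pcomm_mul_right (h : Commute (pcomm a b) c) : pcomm a (b * c) = pcomm a c * pcomm a b :=
  calc pcomm a (b * c) = a⁻¹ * c⁻¹ * a * (pcomm a b * c) := by simp only [pcomm]; group
    _ = a⁻¹ * c⁻¹ * a * (c * pcomm a b) := by rw [h.eq]
    _ = pcomm a c * pcomm a b := by simp only [pcomm]; group

theorem pcomm_mul_left_of_mem_center (hc : c ∈ center G) (a b : G) :
    pcomm (a * c) b = pcomm a b :=
  calc pcomm (a * c) b = c⁻¹ * (pcomm a b * (b⁻¹ * (c * b))) := by simp only [pcomm]; group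
    _ = pcomm a b := by
      rw [← mem_center_iff.mp hc b, inv_mul_cancel_left, mem_center_iff.mp hc (pcomm a b),
        inv_mul_cancel_left]

theorem pcomm_inv_left_eq_inv_mul (a b : G) :
    pcomm a⁻¹ b = (pcomm a b)⁻¹ * pcomm (pcomm a b)⁻¹ a⁻¹ := by
  simp only [pcomm]; group

theorem pcomm_mul_self_right (a b : G) : pcomm (a * b) b = pcomm a b * pcomm (pcomm a b) b := by
  simp only [pcomm]; group

theorem pcomm_mem_lowerCentralSeries_succ {n : ℕ} (ha : a ∈ (⊤ : Subgroup G).lowerCentralSeries n)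
    (b : G) : pcomm a b ∈ (⊤ : Subgroup G).lowerCentralSeries (n + 1) := by
  rw [show pcomm a b = ⁅a⁻¹, b⁻¹⁆ by simp [pcomm, commutatorElement_def]]
  exact commutator_mem_commutator (inv_mem ha) (mem_top _)

theorem pcomm_pcomm_mem_center (h : (⊤ : Subgroup G).lowerCentralSeries 3 = ⊥) (a b c : G) :
    pcomm (pcomm a b) c ∈ center G :=
  commutator_top_right_eq_bot_iff_le_center.mp h <|
    pcomm_mem_lowerCentralSeries_succ (pcomm_mem_lowerCentralSeries_succ (mem_top a) b) c

theorem mem_closure_pair_iff_of_mem_center {u v g : G} (hv : v ∈ center G) :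
    g ∈ closure {u, v} ↔ ∃ i j : ℤ, u ^ i * v ^ j = g := by
  have : (zpowers v).Normal :=
    ⟨fun w hw g => by rwa [mem_center_iff.mp (zpowers_le.mpr hv hw) g, mul_inv_cancel_right]⟩
  rw [Set.insert_eq, Subgroup.closure_union, ← zpowers_eq_closure, ← zpowers_eq_closure,
    mem_sup_of_normal_right]
  simp only [mem_zpowers_iff, exists_exists_eq_and]

end Commutator

section TotalSymmetry

variable {G : Type*} [Group G] {x y z u v : G}

theorem map_commutators_of_map_swap {F : Type*} [FunLike F G G] [MonoidHomClass F G G] (f : F)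
    (hfx : f x = y) (hfy : f y = x) (hz : z = pcomm x y) (hu : u = pcomm z x)
    (hv : v = pcomm z y) (huc : u ∈ center G) (hvc : v ∈ center G) :
    f z = z⁻¹ ∧ f u = v⁻¹ ∧ f v = u⁻¹ := by
  have hfz : f z = z⁻¹ := by rw [hz, map_pcomm, hfx, hfy, pcomm_inv]
  subst hu hv
  refine ⟨hfz, ?_, ?_⟩
  · rw [map_pcomm, hfz, hfx, pcomm_inv_left (mem_center_iff.mp hvc z)]
  · rw [map_pcomm, hfz, hfy, pcomm_inv_left (mem_center_iff.mp huc z)]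

theorem map_commutators_of_map_inv {F : Type*} [FunLike F G G] [MonoidHomClass F G G] (f : F)
    (hfx : f x = x⁻¹) (hfy : f y = y) (hz : z = pcomm x y) (hu : u = pcomm z x)
    (hv : v = pcomm z y) (huc : u ∈ center G) (hvc : v ∈ center G) :
    f z = z⁻¹ * u ∧ f u = u ∧ f v = v⁻¹ := by
  subst hu hv
  have hzx : pcomm z⁻¹ x⁻¹ = pcomm z x :=
    pcomm_inv_inv (mem_center_iff.mp huc z) (mem_center_iff.mp huc x)
  have hfz : f z = z⁻¹ * pcomm z x := by
    rw [hz, map_pcomm, hfx, hfy, pcomm_inv_left_eq_inv_mul, ← hz, hzx]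
  refine ⟨hfz, ?_, ?_⟩
  · rw [map_pcomm, hfz, hfx, pcomm_mul_left_of_mem_center huc, hzx]
  · rw [map_pcomm, hfz, hfy, pcomm_mul_left_of_mem_center huc,
      pcomm_inv_left (mem_center_iff.mp hvc z)]

theorem map_commutators_of_map_mul {F : Type*} [FunLike F G G] [MonoidHomClass F G G] (f : F)
    (hfx : f x = x * y) (hfy : f y = y) (hz : z = pcomm x y) (hu : u = pcomm z x)
    (hv : v = pcomm z y) (huc : u ∈ center G) (hvc : v ∈ center G) :
    f z = z * v ∧ f u = v * u ∧ f v = v := by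
  have hfz : f z = z * v := by rw [hz, map_pcomm, hfx, hfy, pcomm_mul_self_right, ← hz, hv]
  subst hu hv
  refine ⟨hfz, ?_, ?_⟩
  · rw [map_pcomm, hfz, hfx, pcomm_mul_left_of_mem_center hvc,
      pcomm_mul_right (mem_center_iff.mp huc y).symm]
  · rw [map_pcomm, hfz, hfy, pcomm_mul_left_of_mem_center hvc]

end TotalSymmetry

section Exponents

variable {G F : Type*} [Group G] [FunLike F G G] [MonoidHomClass F G G] {z u v : G} {i j k : ℤ}

theorem zpow_sub_eq_zpow_sub_of_swap (f : F) (hz : f z = z⁻¹) (hu : f u = v⁻¹) (hv : f v = u⁻¹)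
    (h : u ^ i * v ^ j = z ^ k) : u ^ (j - i) = v ^ (j - i) := by
  have hswap : u ^ i * v ^ j = u ^ j * v ^ i :=
    calc u ^ i * v ^ j = (f (z ^ k))⁻¹ := by rw [map_zpow, hz, inv_zpow, inv_inv, h]
      _ = (f (u ^ i * v ^ j))⁻¹ := by rw [h]
      _ = u ^ j * v ^ i := by rw [map_mul, map_zpow, map_zpow, hu, hv, inv_zpow, inv_zpow,
        ← mul_inv_rev, inv_inv]
  calc u ^ (j - i) = u ^ (-i) * (u ^ j * v ^ i) * v ^ (-i) := by group
    _ = u ^ (-i) * (u ^ i * v ^ j) * v ^ (-i) := by rw [hswap]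
    _ = v ^ (j - i) := by group

theorem zpow_eq_zpow_two_mul_of_inv (f : F) (hz : f z = z⁻¹ * u) (hu : f u = u)
    (hv : f v = v⁻¹) (hzu : Commute z u) (huv : Commute u v) (h : u ^ i * v ^ j = z ^ k) :
    u ^ k = u ^ (2 * i) :=
  calc u ^ k = z ^ k * (z⁻¹ * u) ^ k := by rw [hzu.inv_left.mul_zpow, inv_zpow, mul_inv_cancel_left]
    _ = u ^ i * v ^ j * f (u ^ i * v ^ j) := by rw [h, map_zpow, hz]
    _ = u ^ i * (v ^ j * u ^ i) * (v ^ j)⁻¹ := by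
      rw [map_mul, map_zpow, map_zpow, hu, hv, inv_zpow]; group
    _ = u ^ i * (u ^ i * v ^ j) * (v ^ j)⁻¹ := by rw [(huv.zpow_zpow i j).eq]
    _ = u ^ (2 * i) := by group

theorem zpow_eq_zpow_of_mul (f : F) (hz : f z = z * v) (hu : f u = v * u) (hv : f v = v)
    (hzv : Commute z v) (huv : Commute u v) (h : u ^ i * v ^ j = z ^ k) : v ^ k = v ^ i :=
  calc v ^ k = (u ^ i * v ^ j)⁻¹ * (z ^ k * v ^ k) := by rw [← h]; group
    _ = (u ^ i * v ^ j)⁻¹ * f (u ^ i * v ^ j) := by rw [← hzv.mul_zpow, ← hz, ← map_zpow, h]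
    _ = (u ^ i * v ^ j)⁻¹ * (u ^ i * v ^ i * v ^ j) := by
      rw [map_mul, map_zpow, map_zpow, hu, hv, huv.symm.mul_zpow, (huv.zpow_zpow i i).eq]
    _ = v ^ i := by group

theorem zpow_eq_one_of_map_eq_inv {a b : G} {n : ℤ} (f : G ≃* G) (h : f a = b⁻¹)
    (hb : b ^ n = 1) : a ^ n = 1 :=
  f.injective <| by rw [map_zpow, h, inv_zpow, hb, inv_one, map_one]

end Exponents

theorem zpowers_inf_closure_eq_bot {G : Type*} [Group G] {z u v : G} (huc : u ∈ center G)
    (hvc : v ∈ center G) (τ : G ≃* G) (π ζ : G →* G) (hτ : τ z = z⁻¹ ∧ τ u = v⁻¹ ∧ τ v = u⁻¹)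
    (hπ : π z = z⁻¹ * u ∧ π u = u ∧ π v = v⁻¹) (hζ : ζ z = z * v ∧ ζ u = v * u ∧ ζ v = v)
    (huv : zpowers u ⊓ zpowers v = ⊥) : zpowers z ⊓ closure {u, v} = ⊥ := by
  obtain ⟨hτz, hτu, hτv⟩ := hτ
  obtain ⟨hπz, hπu, hπv⟩ := hπ
  obtain ⟨hζz, hζu, hζv⟩ := hζ
  have hcomm : Commute u v := mem_center_iff.mp hvc u
  rw [eq_bot_iff_forall]
  rintro g ⟨hgz, hguv⟩
  obtain ⟨k, rfl⟩ := mem_zpowers_iff.mp hgz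
  obtain ⟨i, j, h⟩ := (mem_closure_pair_iff_of_mem_center hvc).mp hguv
  have hsub := zpow_sub_eq_zpow_sub_of_swap τ hτz hτu hτv h
  have huji : u ^ (j - i) = 1 := by
    have : u ^ (j - i) ∈ zpowers u ⊓ zpowers v :=
      ⟨zpow_mem_zpowers u _, hsub ▸ zpow_mem_zpowers v _⟩
    rwa [huv, mem_bot] at this
  have hu2i : u ^ (k - 2 * i) = 1 := by
    rw [zpow_sub, zpow_eq_zpow_two_mul_of_inv π hπz hπu hπv (mem_center_iff.mp huc z) hcomm h,
      mul_inv_cancel]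
  have hvki : v ^ (k - i) = 1 := by
    rw [zpow_sub, zpow_eq_zpow_of_mul ζ hζz hζu hζv (mem_center_iff.mp hvc z) hcomm h,
      mul_inv_cancel]
  have hui : u ^ i = 1 := by
    rw [show i = k - i - (k - 2 * i) by ring, zpow_sub, zpow_eq_one_of_map_eq_inv τ hτu hvki, hu2i,
      mul_inv_cancel]
  have hvj : v ^ j = 1 := by
    rw [show j = j - i + i by ring, zpow_add, ← hsub, huji, zpow_eq_one_of_map_eq_inv τ hτv hui,
      mul_one]
  rw [← h, hui, hvj, mul_one]

theorem stmt_14_general {G : Type*} [Group G]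
    (h4 : (⊤ : Subgroup G).lowerCentralSeries 3 = ⊥)
    (x y : G)
    (hτ : ∃ τ : G ≃* G, τ x = y ∧ τ y = x)
    (hπ : ∃ π : G ≃* G, π x = x⁻¹ ∧ π y = y)
    (hζ : ∃ ζ : G ≃* G, ζ x = x * y ∧ ζ y = y)
    (z u v : G) (hz : z = pcomm x y) (hu : u = pcomm z x) (hv : v = pcomm z y)
    (huv : Subgroup.zpowers u ⊓ Subgroup.zpowers v = ⊥) :
    Subgroup.zpowers z ⊓ Subgroup.closure {u, v} = ⊥ := by
  obtain ⟨τ, hτx, hτy⟩ := hτ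
  obtain ⟨π, hπx, hπy⟩ := hπ
  obtain ⟨ζ, hζx, hζy⟩ := hζ
  have huc : u ∈ center G := hu ▸ hz ▸ pcomm_pcomm_mem_center h4 x y x
  have hvc : v ∈ center G := hv ▸ hz ▸ pcomm_pcomm_mem_center h4 x y y
  exact zpowers_inf_closure_eq_bot huc hvc τ π ζ
    (map_commutators_of_map_swap τ hτx hτy hz hu hv huc hvc)
    (map_commutators_of_map_inv π hπx hπy hz hu hv huc hvc)
    (map_commutators_of_map_mul ζ hζx hζy hz hu hv huc hvc) huv

/-- Let `G` be a finite `p`-group of class 3 generated by `x, y`, such that the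
three assignments `x↦y, y↦x`; `x↦x⁻¹, y↦y`; `x↦xy, y↦y` extend to automorphisms
of `G`.  With `z=[x,y]`, `u=[z,x]`, `v=[z,y]` of orders `o(u)=o(v)=p^c`,
if `⟨u⟩ ∩ ⟨v⟩ = 1` then `⟨z⟩ ∩ ⟨u,v⟩ = 1`. -/
theorem stmt_14 {G : Type*} [Group G] [Finite G] (p : ℕ) (hp : p.Prime)
    (hpG : IsPGroup p G)
    (h4 : (⊤ : Subgroup G).lowerCentralSeries 3 = ⊥) (h3 : (⊤ : Subgroup G).lowerCentralSeries 2 ≠ ⊥)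
    (x y : G) (hgen : Subgroup.closure {x, y} = ⊤)
    (hτ : ∃ τ : G ≃* G, τ x = y ∧ τ y = x)
    (hπ : ∃ π : G ≃* G, π x = x⁻¹ ∧ π y = y)
    (hζ : ∃ ζ : G ≃* G, ζ x = x * y ∧ ζ y = y)
    (z u v : G) (hz : z = pcomm x y) (hu : u = pcomm z x) (hv : v = pcomm z y)
    (c : ℕ) (hou : orderOf u = p ^ c) (hov : orderOf v = p ^ c)
    (huv : Subgroup.zpowers u ⊓ Subgroup.zpowers v = ⊥) :
    Subgroup.zpowers z ⊓ Subgroup.closure {u, v} = ⊥ :=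
  stmt_14_general h4 x y hτ hπ hζ z u v hz hu hv huv
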